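/- arXiv:1901.07026 — 3 statements merged into one kernel-verified Lean document; each statement's English description precedes it below -/
import Mathlib

section
/- Suppose ⟨ is an Aut(M)-invariant ternary relation on small subsets of a monster model M satisfying strong finite character, existence over models, monotonicity, and symmetry. Then for any model M₀ ≼ M and tuples a, b, if tp(a/M₀b) is finitely satisfiable in M₀ (i.e. a ⫞ᵘ_{M₀} b), then a ⫞_{M₀} b. -/
open FirstOrder Set Cardinal

universe u v w x y

namespace KimPaper

variable {L : FirstOrder.Language.{u, v}} {M : Type w} [L.Structure M]

/-- Realization, at the tuple `a`, of a formula whose parameter variables range over `A`. -/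
def RealizeOver (A : Set M) {γ : Type x} (φ : L.Formula (γ ⊕ ↥A)) (a : γ → M) : Prop :=
  φ.Realize (Sum.elim a (fun p => (p : M)))

/-- `a ≡_A b` : the tuples `a` and `b` have the same type over `A`. -/
def EqTp (A : Set M) {γ : Type x} (a b : γ → M) : Prop :=
  ∀ φ : L.Formula (γ ⊕ ↥A), RealizeOver A φ a ↔ RealizeOver A φ b

/-- The sequence `b` of `γ`-tuples is (order-)indiscernible over `A`. -/
def Indiscernible (A : Set M) {I : Type*} [LinearOrder I] {γ : Type x} (b : I → γ → M) : Prop :=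
  ∀ (n : ℕ) (s t : Fin n → I), StrictMono s → StrictMono t →
    EqTp (L := L) A (fun p : Fin n × γ => b (s p.1) p.2) (fun p : Fin n × γ => b (t p.1) p.2)

/-- `a ⫞ᵘ_A B` : the type of `a` over `A ∪ B` is finitely satisfiable in `A` (coheir). -/
def Coheir (A : Set M) {γ : Type x} (a : γ → M) (B : Set M) : Prop :=
  ∀ φ : L.Formula (γ ⊕ ↥(A ∪ B)), φ.Realize (Sum.elim a Subtype.val) →
    ∃ a' : γ → M, (∀ i, a' i ∈ A) ∧ φ.Realize (Sum.elim a' Subtype.val)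

/-- `a ⫞ʰ_A b` : the type of `a` over `A ∪ b` is an heir of its restriction to `A`. -/
def Heir (A : Set M) {γ : Type x} {δ : Type*} (a : γ → M) (b : δ → M) : Prop :=
  ∀ φ : L.Formula (γ ⊕ (δ ⊕ ↥A)),
    φ.Realize (Sum.elim a (Sum.elim b Subtype.val)) →
    ∃ b' : δ → M, (∀ i, b' i ∈ A) ∧ φ.Realize (Sum.elim a (Sum.elim b' Subtype.val))

/-- A complete global type (over the monster `M`) in variables indexed by `γ`.
Formulas with parameters in `M` are represented as formulas with variables `γ ⊕ M`,
the `M`-indexed variables being assigned to themselves. -/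
structure GlobalType (L : FirstOrder.Language.{u, v}) (M : Type w) [L.Structure M] (γ : Type x) where
  Mem : L.Formula (γ ⊕ M) → Prop
  mem_not : ∀ φ : L.Formula (γ ⊕ M), Mem φ.not ↔ ¬ Mem φ
  mem_inf : ∀ φ ψ : L.Formula (γ ⊕ M), Mem φ → Mem ψ → Mem (φ ⊓ ψ)
  mem_sat : ∀ φ : L.Formula (γ ⊕ M), Mem φ → ∃ a : γ → M, φ.Realize (Sum.elim a id)

/-- The global type `q` is invariant over `A`. -/
def GlobalType.Invariant {γ : Type x} (q : GlobalType L M γ) (A : Set M) : Prop :=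
  ∀ (n : ℕ) (f g : Fin n → M) (φ : L.Formula (γ ⊕ Fin n)),
    EqTp (L := L) A f g →
    (q.Mem (φ.relabel (Sum.map id f)) ↔ q.Mem (φ.relabel (Sum.map id g)))

/-- The global type `q` extends `tp(b/A)`. -/
def GlobalType.ExtendsTp {γ : Type x} (q : GlobalType L M γ) (A : Set M) (b : γ → M) : Prop :=
  ∀ φ : L.Formula (γ ⊕ ↥A), RealizeOver A φ b → q.Mem (φ.relabel (Sum.map id Subtype.val))

/-- The global type `q` is finitely satisfiable in `A`. -/
def GlobalType.FinSatIn {γ : Type x} (q : GlobalType L M γ) (A : Set M) : Prop :=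
  ∀ φ : L.Formula (γ ⊕ M), q.Mem φ → ∃ a : γ → M, (∀ i, a i ∈ A) ∧ φ.Realize (Sum.elim a id)

/-- `b` realizes the restriction `q ↾ B` of the global type `q` to the parameter set `B`. -/
def GlobalType.RealizesRestrictedTo {γ : Type x} (q : GlobalType L M γ) (B : Set M)
    (b : γ → M) : Prop :=
  ∀ φ : L.Formula (γ ⊕ ↥B), q.Mem (φ.relabel (Sum.map id Subtype.val)) → RealizeOver B φ b

/-- `b` is a Morley sequence in the global type `q` over `A` (indexed by a linear order `I`):
each `b i` realizes the restriction of `q` to `A ∪ {b j : j < i}`. -/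
def IsMorleyIn {γ : Type x} (q : GlobalType L M γ) (A : Set M) {I : Type*} [LinearOrder I]
    (b : I → γ → M) : Prop :=
  ∀ i : I, q.RealizesRestrictedTo (A ∪ ⋃ j ∈ {j : I | j < i}, Set.range (b j)) (b i)

/-- The family `{φ(x ; b i) : i < ω}` is inconsistent. -/
def Inconsistent {γ : Type x} {δ : Type*} (φ : L.Formula (γ ⊕ δ)) (b : ℕ → δ → M) : Prop :=
  ∃ s : Finset ℕ, ¬ ∃ a : γ → M, ∀ i ∈ s, φ.Realize (Sum.elim a (b i))

/-- The family `{φ(x ; b i) : i < ω}` is `k`-inconsistent. -/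
def KInconsistent {γ : Type x} {δ : Type*} (φ : L.Formula (γ ⊕ δ)) (b : ℕ → δ → M)
    (k : ℕ) : Prop :=
  ∀ s : Finset ℕ, s.card = k → ¬ ∃ a : γ → M, ∀ i ∈ s, φ.Realize (Sum.elim a (b i))

/-- `φ(x;b)` Kim-divides over `A`: the instances of `φ` along some Morley sequence in some
global `A`-invariant type extending `tp(b/A)` are inconsistent. -/
def KimDivides (A : Set M) {γ : Type x} {δ : Type*} (φ : L.Formula (γ ⊕ δ)) (b : δ → M) : Prop :=
  ∃ q : GlobalType L M δ, q.Invariant A ∧ q.ExtendsTp A b ∧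
    ∃ bs : ℕ → δ → M, IsMorleyIn q A bs ∧ Inconsistent φ bs

/-- `ψ(x)` (a formula with parameters in `M`, coded via variables `γ ⊕ M`) Kim-forks over `A`:
it implies a finite disjunction of formulas, each Kim-dividing over `A`. -/
def KimForks (A : Set M) {γ : Type x} (ψ : L.Formula (γ ⊕ M)) : Prop :=
  ∃ (n : ℕ) (Φ : Fin n → L.Formula (γ ⊕ M)),
    (∀ j, KimDivides A (Φ j) (id : M → M)) ∧
    ∀ a : γ → M, ψ.Realize (Sum.elim a id) → ∃ j, (Φ j).Realize (Sum.elim a id)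

/-- `a ⫞ᴷ_A b` : `tp(a / A b)` does not Kim-fork over `A`. -/
def KimIndep (A : Set M) {γ : Type x} {δ : Type*} (a : γ → M) (b : δ → M) : Prop :=
  ∀ φ : L.Formula (γ ⊕ (δ ⊕ ↥A)),
    φ.Realize (Sum.elim a (Sum.elim b Subtype.val)) →
    ¬ KimForks A (φ.relabel (Sum.map id (Sum.elim b Subtype.val)))

/-- An `⫞ᴷ`-Morley sequence over `A`: an `A`-indiscernible sequence with `bᵢ ⫞ᴷ_A b₍₋ᵢ₎`. -/
def KimMorley (A : Set M) {δ : Type*} (b : ℕ → δ → M) : Prop :=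
  Indiscernible (L := L) A b ∧
    ∀ i : ℕ, KimIndep (L := L) A (b i) (fun p : Fin i × δ => b p.1 p.2)

/-- A total `⫞ᴷ`-Morley sequence over `A`: `A`-indiscernible with `b₍₊ᵢ₎ ⫞ᴷ_A b₍≤ᵢ₎`. -/
def TotalKimMorley (A : Set M) {δ : Type*} (b : ℕ → δ → M) : Prop :=
  Indiscernible (L := L) A b ∧
    ∀ i : ℕ, KimIndep (L := L) A (fun p : {j : ℕ // i < j} × δ => b p.1 p.2)
      (fun p : {j : ℕ // j ≤ i} × δ => b p.1 p.2)

/-- The sequence `b` is a witness for Kim-dividing over `A` : every formula (with parameters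
in `A`) Kim-dividing at `b 0` is inconsistent along the sequence. -/
def WitnessSeq (A : Set M) {δ : Type*} (b : ℕ → δ → M) : Prop :=
  ∀ (n : ℕ) (φ : L.Formula (Fin n ⊕ (δ ⊕ ↥A))),
    KimDivides A φ (Sum.elim (b 0) Subtype.val) →
    ∃ s : Finset ℕ, ¬ ∃ a : Fin n → M, ∀ i ∈ s,
      φ.Realize (Sum.elim a (Sum.elim (b i) Subtype.val))

/-- A strong witness for Kim-dividing over `A`: every sequence of consecutive `k`-blocks
is a witness for Kim-dividing over `A`. -/
def StrongWitnessSeq (A : Set M) {δ : Type*} (b : ℕ → δ → M) : Prop :=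
  ∀ k : ℕ, 0 < k → WitnessSeq (L := L) A (fun i (p : Fin k × δ) => b (k * i + p.1) p.2)

/-- `φ(x;a)` `k`-Kim-divides over `A` : some `⫞ᴷ`-Morley sequence over `A` starting with `a`
makes `{φ(x;aᵢ)}` `k`-inconsistent. -/
def KKimDivides (A : Set M) {γ : Type x} {δ : Type*} (φ : L.Formula (γ ⊕ δ)) (a : δ → M)
    (k : ℕ) : Prop :=
  ∃ as : ℕ → δ → M, as 0 = a ∧ KimMorley (L := L) A as ∧ KInconsistent φ as k

/-- The formula `φ(x;y)` has SOP₁ (in `M`). -/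
def FormulaSOP1 {n m : ℕ} (φ : L.Formula (Fin n ⊕ Fin m)) (M : Type w) [L.Structure M] : Prop :=
  ∃ t : List Bool → Fin m → M,
    (∀ f : ℕ → Bool, ∀ N : ℕ, ∃ a : Fin n → M, ∀ k ≤ N,
        φ.Realize (Sum.elim a (t (List.ofFn (fun i : Fin k => f i))))) ∧
    (∀ ν η : List Bool, ν ++ [false] <+: η →
      ¬ ∃ a : Fin n → M, φ.Realize (Sum.elim a (t η)) ∧
        φ.Realize (Sum.elim a (t (ν ++ [true]))))

/-- `T = Th(M)` has SOP₁. -/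
def HasSOP1 (L : FirstOrder.Language.{u, v}) (M : Type w) [L.Structure M] : Prop :=
  ∃ (n m : ℕ) (φ : L.Formula (Fin n ⊕ Fin m)), FormulaSOP1 φ M

/-- `T = Th(M)` is NSOP₁. -/
def NSOP1 (L : FirstOrder.Language.{u, v}) (M : Type w) [L.Structure M] : Prop := ¬ HasSOP1 L M

/-- `M` is `κ`-saturated: every type in `< κ` variables over a parameter set of size `< κ`
which is finitely satisfiable in `M` is realized in `M`. -/
def IsSaturatedIn (L : FirstOrder.Language.{u, v}) (M : Type w) [L.Structure M] (κ : Cardinal.{w}) : Prop :=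
  ∀ (γ : Type w) (A : Set M), #γ < κ → #A < κ →
    ∀ Sig : Set (L.Formula (γ ⊕ ↥A)),
      (∀ s : Finset (L.Formula (γ ⊕ ↥A)), ↑s ⊆ Sig →
        ∃ a : γ → M, ∀ φ ∈ s, φ.Realize (Sum.elim a Subtype.val)) →
      ∃ a : γ → M, ∀ φ ∈ Sig, φ.Realize (Sum.elim a Subtype.val)

/-- `a` is a `D`-average of the sequences `bs i` over the parameter set `A`. -/
def IsAverage {I : Type*} (D : Ultrafilter I) (A : Set M) {δ : Type*}
    (bs : I → ℕ → δ → M) (a : ℕ → δ → M) : Prop :=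
  ∀ (n : ℕ) (φ : L.Formula ((Fin n × δ) ⊕ ↥A)),
    (φ.Realize (Sum.elim (fun p : Fin n × δ => a p.1 p.2) Subtype.val) ↔
      {i : I | φ.Realize (Sum.elim (fun p : Fin n × δ => bs i p.1 p.2) Subtype.val)} ∈ D)

variable {L : FirstOrder.Language.{u, v}} {M : Type w} [L.Structure M]

/-
Suppose `a ⫝̸_{M₀} b`. By strong finite character this is witnessed by a formula `φ(x, b, m)`
true of `a` all of whose realizations are dependent from `b`. As `tp(a/M₀b)` is finitely
satisfiable in `M₀`, some `a'` in `M₀` realizes `φ`. But existence gives `b ⫝_{M₀} M₀`, hence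
`b ⫝_{M₀} a'` by monotonicity and `a' ⫝_{M₀} b` by symmetry, a contradiction.
-/

theorem Coheir.exists_realize_mem {A : Set M} {γ : Type x} {δ : Type y} {a : γ → M} {b : δ → M}
    (hu : Coheir (L := L) A a (Set.range b)) (φ : L.Formula (γ ⊕ (δ ⊕ ↥A)))
    (hφ : φ.Realize (Sum.elim a (Sum.elim b Subtype.val))) :
    ∃ a' : γ → M, (∀ i, a' i ∈ A) ∧ φ.Realize (Sum.elim a' (Sum.elim b Subtype.val)) := by
  let params : δ ⊕ ↥A → ↥(A ∪ Set.range b) :=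
    Sum.elim (fun i => ⟨b i, Or.inr ⟨i, rfl⟩⟩) (fun m => ⟨m, Or.inl m.2⟩)
  have hparams : ∀ c : γ → M,
      Sum.elim c Subtype.val ∘ Sum.map id params = Sum.elim c (Sum.elim b Subtype.val) := by
    intro c
    funext v
    rcases v with _ | _ | _ <;> rfl
  obtain ⟨a', ha'A, ha'⟩ := hu (φ.relabel (Sum.map id params))
    (by rwa [Language.Formula.realize_relabel, hparams])
  rw [Language.Formula.realize_relabel, hparams] at ha'
  exact ⟨a', ha'A, ha'⟩

theorem coheir_implies_indep_general
    (R : Set M → Set M → Set M → Prop)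
    -- strong finite character
    (hsfc : ∀ (S : L.ElementarySubstructure M) (γ δ : Type w) (a : γ → M) (b : δ → M),
      ¬ R (Set.range a) (Set.range b) ↑S →
      ∃ φ : L.Formula (γ ⊕ (δ ⊕ ↥(S : Set M))),
        φ.Realize (Sum.elim a (Sum.elim b Subtype.val)) ∧
        ∀ a' : γ → M, φ.Realize (Sum.elim a' (Sum.elim b Subtype.val)) →
          ¬ R (Set.range a') (Set.range b) ↑S)
    -- existence over models
    (hex : ∀ (S : L.ElementarySubstructure M) (A : Set M), R A ↑S ↑S)
    -- monotonicity
    (hmono : ∀ (S : L.ElementarySubstructure M) (A A' B B' : Set M),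
      A ⊆ A' → B ⊆ B' → R A' B' ↑S → R A B ↑S)
    -- symmetry
    (hsym : ∀ (S : L.ElementarySubstructure M) (A B : Set M), R A B ↑S → R B A ↑S)
    (S : L.ElementarySubstructure M) {γ δ : Type w} (a : γ → M) (b : δ → M)
    (hu : Coheir (L := L) (S : Set M) a (Set.range b)) :
    R (Set.range a) (Set.range b) ↑S := by
  by_contra h
  obtain ⟨φ, hφ, hfails⟩ := hsfc S γ δ a b h
  obtain ⟨a', ha'S, ha'⟩ := hu.exists_realize_mem φ hφ
  have hindep : R (Set.range a') (Set.range b) ↑S :=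
    hsym S _ _ (hmono S _ _ _ _ subset_rfl (Set.range_subset_iff.2 ha'S) (hex S _))
  exact hfails a' ha' hindep

/-- an invariant independence relation with strong finite character,
existence over models, monotonicity and symmetry is implied by coheir independence. -/
theorem coheir_implies_indep
    (R : Set M → Set M → Set M → Prop)
    -- Aut(M)-invariance
    (hinv : ∀ (σ : M ≃[L] M) (A B C : Set M), R A B C → R (σ '' A) (σ '' B) (σ '' C))
    -- strong finite character
    (hsfc : ∀ (S : L.ElementarySubstructure M) (γ δ : Type w) (a : γ → M) (b : δ → M),
      ¬ R (Set.range a) (Set.range b) ↑S →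
      ∃ φ : L.Formula (γ ⊕ (δ ⊕ ↥(S : Set M))),
        φ.Realize (Sum.elim a (Sum.elim b Subtype.val)) ∧
        ∀ a' : γ → M, φ.Realize (Sum.elim a' (Sum.elim b Subtype.val)) →
          ¬ R (Set.range a') (Set.range b) ↑S)
    -- existence over models
    (hex : ∀ (S : L.ElementarySubstructure M) (A : Set M), R A ↑S ↑S)
    -- monotonicity
    (hmono : ∀ (S : L.ElementarySubstructure M) (A A' B B' : Set M),
      A ⊆ A' → B ⊆ B' → R A' B' ↑S → R A B ↑S)
    -- symmetry
    (hsym : ∀ (S : L.ElementarySubstructure M) (A B : Set M), R A B ↑S → R B A ↑S)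
    (S : L.ElementarySubstructure M) {γ δ : Type w} (a : γ → M) (b : δ → M)
    (hu : Coheir (L := L) (S : Set M) a (Set.range b)) :
    R (Set.range a) (Set.range b) ↑S :=
  coheir_implies_indep_general R hsfc hex hmono hsym S a b hu

end KimPaper
end

section
/- With notation as in the previous setting: suppose ⟨M_i : i ≤ α⟩ is an increasing continuous elementary chain, for each i < α the sequence b̄_i = ⟨b_{i,j} : j < ω⟩ is an indiscernible heir sequence over M_i, and b_{i,0} ≡_{M_i} b_{j,0} for all i ≤ j. Let D be an ultrafilter on α concentrating on end segments and let ā = ⟨a_j : j < ω⟩ realize the D-average of ⟨b̄_i : i < α⟩ over M_α. Then ā is an indiscernible heir sequence over M_α and a₀ ≡_{M_i} b_{i,0} for every i < α. -/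
/-!
A formula over `M_α = ⋃ M_i` has its finitely many parameters in some `M_i`, and `D` contains
every end segment, so each formula over `M_α` is decided along `ā` as it is along `b̄_i` for
`D`-almost all `i`. Over `M_i`, `a_j` has the type of `b_{i',j}` for `i' ≥ i`, which by
indiscernibility and `b_{i,0} ≡_{M_i} b_{i',0}` is the type of `b_{i,j}`. For the heir property,
a formula `φ(a_j, a_{<j})` over `M_α` holds of `(b_{i,j}, b_{i,<j})` for some `i` beyond its
parameters; the heir property of `b̄_i` gives `d ∈ M_i` with `φ(b_{i,j}, d)`, and then
`φ(a_j, d)` since `a_j ≡_{M_i} b_{i,j}`.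
-/

open FirstOrder Set Cardinal

universe u v w x y

namespace KimPaper

variable {L : FirstOrder.Language.{u, v}} {M : Type w} [L.Structure M]

variable {L : FirstOrder.Language.{u, v}} {M : Type w} [L.Structure M]

theorem realizeOver_relabel_inclusion {B C : Set M} (h : B ⊆ C) {γ : Type x}
    (φ : L.Formula (γ ⊕ ↥B)) (c : γ → M) :
    RealizeOver C (φ.relabel (Sum.map id (Set.inclusion h))) c ↔ RealizeOver B φ c := by
  unfold RealizeOver
  rw [Language.Formula.realize_relabel]
  congr!
  funext p
  rcases p with _ | _ <;> rfl

namespace EqTp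

variable {A B : Set M} {γ : Type x} {c c' c'' : γ → M}

theorem symm (h : EqTp (L := L) A c c') : EqTp (L := L) A c' c :=
  fun φ => (h φ).symm

theorem trans (h : EqTp (L := L) A c c') (h' : EqTp (L := L) A c' c'') :
    EqTp (L := L) A c c'' :=
  fun φ => (h φ).trans (h' φ)

theorem mono (hAB : A ⊆ B) (h : EqTp (L := L) B c c') : EqTp (L := L) A c c' := by
  intro φ
  rw [← realizeOver_relabel_inclusion hAB φ c, ← realizeOver_relabel_inclusion hAB φ c']
  exact h _

/-- Parameters from `A` may be moved into the formula, so they can be added to both sides. -/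
theorem realizeOver_sumElim_iff (h : EqTp (L := L) A c c') {δ : Type*} {d : δ → M}
    (hd : ∀ q, d q ∈ A) (ψ : L.Formula ((γ ⊕ δ) ⊕ ↥A)) :
    RealizeOver A ψ (Sum.elim c d) ↔ RealizeOver A ψ (Sum.elim c' d) := by
  let σ : (γ ⊕ δ) ⊕ ↥A → γ ⊕ ↥A :=
    Sum.elim (Sum.elim Sum.inl fun q => Sum.inr ⟨d q, hd q⟩) Sum.inr
  have hσ : ∀ e : γ → M,
      RealizeOver A (ψ.relabel σ) e ↔ RealizeOver A ψ (Sum.elim e d) := by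
    intro e
    unfold RealizeOver
    rw [Language.Formula.realize_relabel]
    congr!
    funext p
    rcases p with (_ | _) | _ <;> rfl
  rw [← hσ, ← hσ]
  exact h _

end EqTp

theorem heir_iff_realizeOver {A : Set M} {γ : Type x} {δ : Type*} {c : γ → M} {d : δ → M} :
    Heir (L := L) A c d ↔
      ∀ φ : L.Formula ((γ ⊕ δ) ⊕ ↥A), RealizeOver A φ (Sum.elim c d) →
      ∃ d' : δ → M, (∀ q, d' q ∈ A) ∧ RealizeOver A φ (Sum.elim c d') := by
  have hassoc : ∀ d' : δ → M, Sum.elim c (Sum.elim d' Subtype.val) ∘ Equiv.sumAssoc γ δ A =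
      Sum.elim (Sum.elim c d') Subtype.val := by
    intro d'
    funext p
    rcases p with (_ | _) | _ <;> rfl
  constructor
  · intro h φ hφ
    have := h (φ.relabel (Equiv.sumAssoc γ δ A))
      (by rwa [Language.Formula.realize_relabel, hassoc])
    simpa only [RealizeOver, Language.Formula.realize_relabel, hassoc] using this
  · intro h φ hφ
    have hassoc' : ∀ d' : δ → M,
        Sum.elim (Sum.elim c d') Subtype.val ∘ (Equiv.sumAssoc γ δ A).symm =
          Sum.elim c (Sum.elim d' Subtype.val) := by
      intro d'
      rw [← hassoc, Function.comp_assoc, Equiv.self_comp_symm, Function.comp_id]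
    have := h (φ.relabel (Equiv.sumAssoc γ δ A).symm)
      (by rwa [RealizeOver, Language.Formula.realize_relabel, hassoc'])
    simpa only [RealizeOver, Language.Formula.realize_relabel, hassoc'] using this

theorem Indiscernible.eqTp_apply {A : Set M} {I : Type*} [LinearOrder I] {γ : Type x}
    {b : I → γ → M} (h : Indiscernible (L := L) A b) (j k : I) :
    EqTp (L := L) A (b j) (b k) := by
  have hone : ∀ (e : γ → M) (θ : L.Formula (γ ⊕ ↥A)),
      RealizeOver A (θ.relabel (Sum.map (fun g => ((0 : Fin 1), g)) id)) (fun p => e p.2) ↔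
        RealizeOver A θ e := by
    intro e θ
    unfold RealizeOver
    rw [Language.Formula.realize_relabel]
    congr!
    funext p
    rcases p with _ | _ <;> rfl
  intro θ
  rw [← hone, ← hone]
  exact h 1 (fun _ => j) (fun _ => k) (Subsingleton.strictMono _) (Subsingleton.strictMono _) _

section DirectedUnion

variable {ι : Type*} [Preorder ι] {A : Set M} {B : ι → Set M}

/-- A formula over `A ⊆ ⋃ i, B i` has finitely many parameters, which all lie in `B i` for
`i` large enough. -/
theorem exists_formula_over_of_subset_iUnion [IsDirected ι (· ≤ ·)] [Nonempty ι]
    (hB : Monotone B) (hA : A ⊆ ⋃ i, B i) {γ : Type x} (φ : L.Formula (γ ⊕ ↥A)) :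
    ∃ i₀, ∀ i, i₀ ≤ i → ∃ ψ : L.Formula (γ ⊕ ↥(B i)),
      ∀ c : γ → M, RealizeOver A φ c ↔ RealizeOver (B i) ψ c := by
  classical
  choose index hindex using fun p : A => Set.mem_iUnion.mp (hA p.2)
  obtain ⟨i₀, hi₀⟩ := Finset.exists_le
    (φ.freeVarFinset.image (Sum.elim (fun _ => Classical.arbitrary ι) index))
  refine ⟨i₀, fun i hi => ?_⟩
  have hmem : ∀ p : A, Sum.inr p ∈ φ.freeVarFinset → (p : M) ∈ B i := fun p hp =>
    hB (le_trans (hi₀ _ (Finset.mem_image_of_mem _ hp)) hi) (hindex p)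
  let f : φ.freeVarFinset → γ ⊕ ↥(B i) := fun x =>
    Sum.casesOn (motive := fun y => y ∈ φ.freeVarFinset → γ ⊕ ↥(B i)) x.1
      (fun g _ => Sum.inl g) (fun p hp => Sum.inr ⟨p, hmem p hp⟩) x.2
  refine ⟨φ.restrictFreeVar f, fun c => ?_⟩
  refine (Language.BoundedFormula.realize_restrictFreeVar _ ?_).symm
  rintro ⟨_ | _, _⟩ <;> rfl

theorem EqTp.of_subset_iUnion [IsDirected ι (· ≤ ·)] [Nonempty ι] (hB : Monotone B)
    (hA : A ⊆ ⋃ i, B i) {γ : Type x} {c c' : γ → M} (h : ∀ i, EqTp (L := L) (B i) c c') :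
    EqTp (L := L) A c c' := by
  intro φ
  obtain ⟨i₀, hi₀⟩ := exists_formula_over_of_subset_iUnion hB hA φ
  obtain ⟨ψ, hψ⟩ := hi₀ i₀ le_rfl
  rw [hψ, hψ]
  exact h i₀ ψ

end DirectedUnion

namespace IsAverage

variable {ι : Type*} {D : Ultrafilter ι} {A : Set M} {δ : Type*} {bs : ι → ℕ → δ → M}
  {a : ℕ → δ → M}

theorem mono {B : Set M} (h : IsAverage (L := L) D A bs a) (hBA : B ⊆ A) :
    IsAverage (L := L) D B bs a := by
  intro n φ
  refine (realizeOver_relabel_inclusion hBA φ _).symm.trans ((h n _).trans ?_)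
  exact Iff.of_eq (congrArg (· ∈ D) (Set.ext fun i => realizeOver_relabel_inclusion hBA φ _))

/-- The average property for tuples reading finitely many terms of the sequences, in any
order and with repetitions. -/
theorem realizeOver_iff {γ : Type x} (h : IsAverage (L := L) D A bs a) (r : γ → ℕ × δ)
    (hr : BddAbove (Set.range fun g => (r g).1)) (φ : L.Formula (γ ⊕ ↥A)) :
    RealizeOver A φ (fun g => a (r g).1 (r g).2) ↔
      ∀ᶠ i in D, RealizeOver A φ (fun g => bs i (r g).1 (r g).2) := by
  obtain ⟨N, hN⟩ := hr
  let r' : γ → Fin (N + 1) × δ :=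
    fun g => (⟨(r g).1, Nat.lt_succ_of_le (hN (Set.mem_range_self g))⟩, (r g).2)
  have hr' : ∀ e : ℕ → δ → M,
      RealizeOver A (φ.relabel (Sum.map r' id)) (fun p : Fin (N + 1) × δ => e p.1 p.2) ↔
        RealizeOver A φ (fun g => e (r g).1 (r g).2) := by
    intro e
    unfold RealizeOver
    rw [Language.Formula.realize_relabel]
    congr!
    funext p
    rcases p with _ | _ <;> rfl
  simp only [← hr']
  exact h (N + 1) _

theorem eqTp_of_eventually_eqTp {γ : Type x} (h : IsAverage (L := L) D A bs a)
    (r : γ → ℕ × δ) (hr : BddAbove (Set.range fun g => (r g).1)) {c : γ → M}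
    (hc : ∀ᶠ i in D, EqTp (L := L) A (fun g => bs i (r g).1 (r g).2) c) :
    EqTp (L := L) A (fun g => a (r g).1 (r g).2) c := by
  intro φ
  rw [h.realizeOver_iff r hr,
    ← Filter.eventually_const (f := (D : Filter ι)) (p := RealizeOver A φ c)]
  exact Filter.eventually_congr (hc.mono fun i hi => hi φ)

theorem eqTp_of_eventually_eqTp_comp {γ : Type x} (h : IsAverage (L := L) D A bs a)
    (r r' : γ → ℕ × δ) (hr : BddAbove (Set.range fun g => (r g).1))
    (hr' : BddAbove (Set.range fun g => (r' g).1))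
    (hc : ∀ᶠ i in D, EqTp (L := L) A (fun g => bs i (r g).1 (r g).2)
      (fun g => bs i (r' g).1 (r' g).2)) :
    EqTp (L := L) A (fun g => a (r g).1 (r g).2) (fun g => a (r' g).1 (r' g).2) := by
  intro φ
  rw [h.realizeOver_iff r hr, h.realizeOver_iff r' hr']
  exact Filter.eventually_congr (hc.mono fun i hi => hi φ)

section Chain

variable [Preorder ι] {B : ι → Set M}

theorem eqTp_apply (h : IsAverage (L := L) D A bs a) {i : ι} (hBA : B i ⊆ A) (hB : Monotone B)
    (hD : ∀ᶠ i' in (D : Filter ι), i ≤ i')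
    (hind : ∀ i, Indiscernible (L := L) (B i) (bs i))
    (hsame : ∀ i', i ≤ i' → EqTp (L := L) (B i) (bs i 0) (bs i' 0)) (j : ℕ) :
    EqTp (L := L) (B i) (a j) (bs i j) := by
  refine (h.mono hBA).eqTp_of_eventually_eqTp (fun d => (j, d))
    ⟨j, Set.forall_mem_range.2 fun _ => le_rfl⟩ ?_
  filter_upwards [hD] with i' hi'
  exact (((hind i').eqTp_apply j 0).mono (hB hi')).trans
    ((hsame i' hi').symm.trans ((hind i).eqTp_apply 0 j))

variable [IsDirected ι (· ≤ ·)]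

theorem indiscernible (h : IsAverage (L := L) D A bs a) (hBA : ∀ i, B i ⊆ A)
    (hA : A ⊆ ⋃ i, B i) (hB : Monotone B) (hD : ∀ i, ∀ᶠ i' in (D : Filter ι), i ≤ i')
    (hind : ∀ i, Indiscernible (L := L) (B i) (bs i)) :
    Indiscernible (L := L) A a := by
  have := Filter.nonempty_of_neBot (D : Filter ι)
  have hbdd : ∀ {n : ℕ} (s : Fin n → ℕ),
      BddAbove (Set.range fun p : Fin n × δ => s p.1) :=
    fun s => (Set.finite_range s).bddAbove.mono (Set.range_comp_subset_range Prod.fst s)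
  intro n s t hs ht
  refine EqTp.of_subset_iUnion hB hA fun i => ?_
  refine (h.mono (hBA i)).eqTp_of_eventually_eqTp_comp (fun p : Fin n × δ => (s p.1, p.2))
    (fun p : Fin n × δ => (t p.1, p.2)) (hbdd s) (hbdd t) ?_
  filter_upwards [hD i] with i' hi'
  exact (hind i' n s t hs ht).mono (hB hi')

theorem heir (h : IsAverage (L := L) D A bs a) (hBA : ∀ i, B i ⊆ A)
    (hA : A ⊆ ⋃ i, B i) (hB : Monotone B) (hD : ∀ i, ∀ᶠ i' in (D : Filter ι), i ≤ i')
    {j : ℕ}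
    (hheir : ∀ i, Heir (L := L) (B i) (bs i j) (fun p : Fin j × δ => bs i p.1.val p.2))
    (htp : ∀ i, EqTp (L := L) (B i) (a j) (bs i j)) :
    Heir (L := L) A (a j) (fun p : Fin j × δ => a p.1.val p.2) := by
  have := Filter.nonempty_of_neBot (D : Filter ι)
  let r : δ ⊕ (Fin j × δ) → ℕ × δ := Sum.elim (fun d => (j, d)) fun p => (p.1.val, p.2)
  have hr : BddAbove (Set.range fun g => (r g).1) :=
    ⟨j, Set.forall_mem_range.2 (Sum.rec (fun _ => le_rfl) fun p => p.1.2.le)⟩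
  have hseq : ∀ e : ℕ → δ → M,
      Sum.elim (e j) (fun p : Fin j × δ => e p.1.val p.2) = fun g => e (r g).1 (r g).2 := by
    intro e
    funext g
    rcases g with _ | _ <;> rfl
  rw [heir_iff_realizeOver]
  intro φ hφ
  obtain ⟨i₀, hi₀⟩ := exists_formula_over_of_subset_iUnion hB hA φ
  rw [hseq, h.realizeOver_iff r hr] at hφ
  obtain ⟨i, hφi, hi⟩ := (hφ.and (hD i₀)).exists
  obtain ⟨ψ, hψ⟩ := hi₀ i hi
  rw [← hseq, hψ] at hφi
  obtain ⟨d', hd', hψd'⟩ := heir_iff_realizeOver.mp (hheir i) ψ hφi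
  exact ⟨d', fun q => hBA i (hd' q),
    (hψ _).mpr (((htp i).realizeOver_sumElim_iff hd' ψ).mpr hψd')⟩

end Chain

end IsAverage

/-- a `D`-average of indiscernible heir sequences over an increasing continuous
elementary chain is an indiscernible heir sequence over the union, preserving the type
of the first element over each `M_i`. -/
theorem average_of_heir_sequences (α : Ordinal.{y}) (D : Ultrafilter α.ToType)
    (hD : ∀ i : α.ToType, {j : α.ToType | i ≤ j} ∈ D)
    (Mc : α.ToType → L.ElementarySubstructure M)
    (hmono : Monotone fun i => (Mc i : Set M))
    (Mtop : L.ElementarySubstructure M)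
    (htop : (Mtop : Set M) = ⋃ i, (Mc i : Set M))
    {δ : Type w} (bs : α.ToType → ℕ → δ → M)
    (hindisc : ∀ i, Indiscernible (L := L) (Mc i : Set M) (bs i))
    (hheir : ∀ (i : α.ToType) (j : ℕ), Heir (L := L) (Mc i : Set M) (bs i j)
      (fun p : Fin j × δ => bs i p.1.val p.2))
    (hsame : ∀ i j : α.ToType, i ≤ j → EqTp (L := L) (Mc i : Set M) (bs i 0) (bs j 0))
    (a : ℕ → δ → M) (havg : IsAverage (L := L) D (Mtop : Set M) bs a) :
    Indiscernible (L := L) (Mtop : Set M) a ∧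
    (∀ j : ℕ, Heir (L := L) (Mtop : Set M) (a j) (fun p : Fin j × δ => a p.1.val p.2)) ∧
    ∀ i : α.ToType, EqTp (L := L) (Mc i : Set M) (a 0) (bs i 0) := by
  have hsub : ∀ i, (Mc i : Set M) ⊆ Mtop := fun i =>
    htop ▸ Set.subset_iUnion (fun i => (Mc i : Set M)) i
  have hkey : ∀ i j, EqTp (L := L) (Mc i : Set M) (a j) (bs i j) := fun i j =>
    havg.eqTp_apply (hsub i) hmono (hD i) hindisc (hsame i) j
  exact ⟨havg.indiscernible hsub htop.subset hmono hD hindisc,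
    fun j => havg.heir hsub htop.subset hmono hD (fun i => hheir i j) (fun i => hkey i j),
    fun i => hkey i 0⟩

end KimPaper
end

section
/- Suppose T has SOP₁. Then there is a formula φ(x;y) and an indiscernible sequence ⟨(a_i, c_{i,0}, c_{i,1}) : i < ω⟩ such that: (1) for all i, a_i realizes {φ(x; c_{j,0}) : j ≤ i}; (2) {φ(x; c_{i,1}) : i < ω} is 2-inconsistent; (3) for all i, c_{i,0} ≡_{a_{<i} c_{<i,0} c_{<i,1}} c_{i,1}. -/
open FirstOrder Set Cardinal

universe u v w x y

namespace KimPaper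

variable {L : FirstOrder.Language.{u, v}} {M : Type w} [L.Structure M]

variable {L : FirstOrder.Language.{u, v}} {M : Type w} [L.Structure M]

/-!
Starting from the SOP₁ tree `t`, build the array row by row. At the current node `ρ` there are
infinitely many teeth `ρ 0ʲ 1`, so for finitely many formulas two of them, `j < k`, have the same
type over the rows built so far: put `c_{i,0} = t(ρ 0ᵏ 1)` and `c_{i,1} = t(ρ 0ʲ 1)`, let `aᵢ`
realize the branch up to `ρ 0ᵏ 1`, and continue from `ρ 0ᵏ 1`. Every `c_{j,0}` with `j ≤ i` lies on
that branch, and `ρ 0ʲ 0` is an initial segment of all later nodes, which gives consistency and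
2-inconsistency. Ramsey's theorem makes the array indiscernible for finitely many formulas, and
saturation realizes the whole type.
-/

open FirstOrder.Language

theorem exists_strictMono_forall_mem_image_range {S : Finset ℕ → Set ℕ}
    (hS : ∀ F, (S F).Infinite) :
    ∃ e : ℕ → ℕ, StrictMono e ∧ ∀ k, e k ∈ S ((Finset.range k).image e) := by
  choose next hnext hgt using fun F : Finset ℕ => (hS F).exists_gt (F.sup id)
  let hist : ℕ → Finset ℕ := fun k => Nat.rec ∅ (fun _ F => insert (next F) F) k
  have hist_eq : ∀ k, hist k = (Finset.range k).image (fun j => next (hist j)) := by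
    intro k
    induction k with
    | zero => rfl
    | succ k ih => rw [Finset.range_add_one, Finset.image_insert, ← ih]
  refine ⟨fun k => next (hist k), strictMono_nat_of_lt_succ fun k => ?_, fun k => ?_⟩
  · refine lt_of_le_of_lt ?_ (hgt (hist (k + 1)))
    exact Finset.le_sup (f := id) (Finset.mem_insert_self _ _)
  · rw [← hist_eq]
    exact hnext _

theorem exists_strictMono_homogeneous {α : Type*} [Finite α] (r : ℕ)
    (f : (Fin r → ℕ) → α) :
    ∃ g : ℕ → ℕ, StrictMono g ∧
      ∀ v w : Fin r → ℕ, StrictMono v → StrictMono w → f (g ∘ v) = f (g ∘ w) := by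
  induction r with
  | zero =>
    exact ⟨id, strictMono_id, fun v w _ _ => congrArg f (Subsingleton.elim _ _)⟩
  | succ r ih =>
    let U := Filter.hyperfilter ℕ
    have hlim : ∀ v : Fin r → ℕ, ∃ c, ∀ᶠ x in (U : Filter ℕ), f (Fin.snoc v x) = c := fun v =>
      Ultrafilter.eventually_exists_iff.1 (Filter.Eventually.of_forall fun x => ⟨_, rfl⟩)
    choose limc hlimc using hlim
    have hS : ∀ F : Finset ℕ,
        {x | ∀ v : Fin r → ℕ, (∀ i, v i ∈ F) → f (Fin.snoc v x) = limc v}.Infinite := by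
      intro F
      have hfin : (Set.pi univ fun _ : Fin r => (F : Set ℕ)).Finite :=
        Set.Finite.pi fun _ => F.finite_toSet
      have hmem : ∀ᶠ x in (U : Filter ℕ), ∀ v ∈ Set.pi univ (fun _ : Fin r => (F : Set ℕ)),
          f (Fin.snoc v x) = limc v :=
        (Filter.eventually_all_finite hfin).2 fun v _ => hlimc v
      exact fun hSfin => Filter.notMem_hyperfilter_of_finite hSfin
        (Filter.mem_of_superset hmem fun x hx v hv => hx v fun i _ => hv i)
    obtain ⟨e, he, hee⟩ := exists_strictMono_forall_mem_image_range hS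
    obtain ⟨g, hg, hgc⟩ := ih fun v => limc (e ∘ v)
    have hsnoc : ∀ v : Fin (r + 1) → ℕ, StrictMono v →
        f (e ∘ g ∘ v) = limc (e ∘ g ∘ Fin.init v) := by
      intro v hv
      rw [← Fin.snoc_init_self (e ∘ g ∘ v)]
      refine hee _ _ fun i => Finset.mem_image.2 ⟨_, Finset.mem_range.2 ?_, rfl⟩
      exact hg (hv (Fin.castSucc_lt_last i))
    refine ⟨e ∘ g, he.comp hg, fun v w hv hw => ?_⟩
    rw [Function.comp_assoc, hsnoc v hv, Function.comp_assoc, hsnoc w hw]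
    exact hgc _ _ (hv.comp Fin.strictMono_castSucc) (hw.comp Fin.strictMono_castSucc)

theorem exists_strictMono_homogeneous_finset {ι α : Type*} [Finite α] (r : ι → ℕ)
    (f : ∀ i, (Fin (r i) → ℕ) → α) (s : Finset ι) :
    ∃ g : ℕ → ℕ, StrictMono g ∧ ∀ i ∈ s,
      ∀ v w : Fin (r i) → ℕ, StrictMono v → StrictMono w → f i (g ∘ v) = f i (g ∘ w) := by
  induction s using Finset.cons_induction with
  | empty => exact ⟨id, strictMono_id, by simp⟩
  | cons i s _ ih =>
    obtain ⟨g, hg, hgs⟩ := ih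
    obtain ⟨h, hh, hhi⟩ := exists_strictMono_homogeneous (r i) fun v => f i (g ∘ v)
    refine ⟨g ∘ h, hg.comp hh, fun j hj v w hv hw => ?_⟩
    rcases Finset.mem_cons.1 hj with rfl | hj
    · exact hhi v w hv hw
    · exact hgs j hj _ _ (hh.comp hv) (hh.comp hw)

theorem eqTp_empty_of_forall_realize {γ : Type x} {a b : γ → M}
    (h : ∀ ψ : L.Formula γ, ψ.Realize a ↔ ψ.Realize b) : EqTp (L := L) ∅ a b := by
  intro ψ
  have key : ∀ c : γ → M, Sum.elim c (fun p : ↥(∅ : Set M) => (p : M)) =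
      c ∘ Sum.elim id fun p => (p.2.elim : γ) :=
    fun c => funext <| Sum.rec (fun _ => rfl) fun p => p.2.elim
  simpa only [RealizeOver, key, ← Formula.realize_relabel] using h (ψ.relabel _)

theorem eqTp_of_forall_realize {A : Set M} {ι : Type*} (e : ι → M) (hA : A ⊆ range e)
    {γ : Type x} {a b : γ → M}
    (h : ∀ ψ : L.Formula (γ ⊕ ι), ψ.Realize (Sum.elim a e) ↔ ψ.Realize (Sum.elim b e)) :
    EqTp (L := L) A a b := by
  choose idx hidx using fun p : A => hA p.2
  intro ψ
  have key : ∀ c : γ → M, Sum.elim c (fun p : A => (p : M)) = Sum.elim c e ∘ Sum.map id idx :=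
    fun c => funext <| Sum.rec (fun _ => rfl) fun p => (hidx p).symm
  simpa only [RealizeOver, key, ← Formula.realize_relabel] using h (ψ.relabel _)

theorem IsSaturatedIn.exists_forall_realize {κ : Cardinal.{w}} (hsat : IsSaturatedIn L M κ)
    (hκ : ℵ₀ < κ) {γ : Type} [Countable γ] {ι : Type*} (Φ : ι → L.Formula γ)
    (hΦ : ∀ s : Finset ι, ∃ v : γ → M, ∀ i ∈ s, (Φ i).Realize v) :
    ∃ v : γ → M, ∀ i, (Φ i).Realize v := by
  classical
  let Φ' : ι → L.Formula (ULift.{w} γ ⊕ ↥(∅ : Set M)) := fun i =>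
    (Φ i).relabel (Sum.inl ∘ ULift.up)
  have hΦ' : ∀ i (v : ULift.{w} γ → M),
      (Φ' i).Realize (Sum.elim v Subtype.val) ↔ (Φ i).Realize (v ∘ ULift.up) := by
    intro i v
    rw [Formula.realize_relabel, ← Function.comp_assoc, Sum.elim_comp_inl]
  obtain ⟨v, hv⟩ := hsat (ULift.{w} γ) ∅ (mk_le_aleph0.trans_lt hκ)
    (by simpa using aleph0_pos.trans hκ) (range Φ') fun s hs => by
      obtain ⟨s, -, rfl⟩ := Finset.subset_set_image_iff.1 (image_univ ▸ hs)
      obtain ⟨v, hv⟩ := hΦ s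
      refine ⟨v ∘ ULift.down, ?_⟩
      simp only [Finset.forall_mem_image, hΦ']
      exact hv
  exact ⟨v ∘ ULift.up, fun i => (hΦ' i v).1 (hv _ ⟨i, rfl⟩)⟩

theorem _root_.List.IsPrefix.ofFn_getD {σ ρ : List Bool} (h : σ <+: ρ) :
    List.ofFn (fun i : Fin σ.length => ρ.getD i false) = σ := by
  refine List.ext_getElem (by simp) fun i h1 h2 => ?_
  rw [List.getElem_ofFn, List.getD_eq_getElem _ _ (h2.trans_le h.length_le)]
  exact (h.getElem h2).symm

theorem exists_prefix_append_false_prefix_eq {α : Type*} [Finite α] (c : List Bool → α)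
    (ρ : List Bool) :
    ∃ ν ρ' : List Bool, ρ <+: ν ∧ ν ++ [false] <+: ρ' ∧ c ρ' = c (ν ++ [true]) := by
  obtain ⟨j, k, hjk, hc⟩ := Set.Finite.exists_lt_map_eq_of_forall_mem
    (f := fun j => c (ρ ++ List.replicate j false ++ [true])) (fun _ => mem_univ _) finite_univ
  refine ⟨ρ ++ List.replicate j false, _, List.prefix_append _ _, ?_, hc.symm⟩
  rw [List.append_assoc, List.append_assoc, List.prefix_append_right_inj, ← List.replicate_succ']
  exact (List.prefix_replicate_iff.2 ⟨by simpa using hjk, by simp⟩).trans (List.prefix_append _ _)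

theorem exists_seq_of_forall_exists_next {σ β : Type*} (s₀ : σ)
    (P : σ → (k : ℕ) → (Fin k → β) → σ → β → Prop)
    (h : ∀ s k past, ∃ s' x, P s k past s' x) :
    ∃ (s : ℕ → σ) (b : ℕ → β), s 0 = s₀ ∧ ∀ k, P (s k) k (fun j => b j) (s (k + 1)) (b k) := by
  choose next x hP using h
  let state : (k : ℕ) → σ × (Fin k → β) := fun k =>
    Nat.rec (s₀, Fin.elim0) (fun k S => (next S.1 k S.2, Fin.snoc S.2 (x S.1 k S.2))) k
  let b : ℕ → β := fun k => x (state k).1 k (state k).2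
  have hpast : ∀ k, (state k).2 = fun j : Fin k => b j := by
    intro k
    induction k with
    | zero => exact funext fun j => j.elim0
    | succ k ih =>
      funext j
      refine Fin.lastCases ?_ (fun j => ?_) j
      · exact Fin.snoc_last (α := fun _ => β) _ _
      · simp only [state, Fin.snoc_castSucc (α := fun _ => β)]
        exact congrFun ih j
  refine ⟨fun k => (state k).1, b, rfl, fun k => ?_⟩
  rw [← hpast k]
  exact hP _ _ _

section Array

variable {n m : ℕ}

/-- The variables of one entry `(aᵢ, c_{i,0}, c_{i,1})` of an array: a row `b i` is read as
`aᵢ = b i ∘ Sum.inl`, `c_{i,0} = b i ∘ Sum.inr ∘ Sum.inl`, `c_{i,1} = b i ∘ Sum.inr ∘ Sum.inr`. -/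
abbrev ArrayVars (n m : ℕ) : Type := Fin n ⊕ (Fin m ⊕ Fin m)

def IsSOP1Array (φ : L.Formula (Fin n ⊕ Fin m)) (b : ℕ → ArrayVars n m → M) : Prop :=
  (∀ i j, j ≤ i → φ.Realize (Sum.elim (b i ∘ Sum.inl) (b j ∘ Sum.inr ∘ Sum.inl))) ∧
    ∀ i j, i ≠ j → ¬ ∃ x : Fin n → M, φ.Realize (Sum.elim x (b i ∘ Sum.inr ∘ Sum.inr)) ∧
      φ.Realize (Sum.elim x (b j ∘ Sum.inr ∘ Sum.inr))

/-- Quantifying over all tuples `w` of earlier rows, not only over the rows `0, …, i - 1` in order,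
makes this stable under passing to subsequences. -/
def SameTypeOn (Δ : Finset (Σ r, L.Formula (Fin m ⊕ (Fin r × ArrayVars n m))))
    (b : ℕ → ArrayVars n m → M) : Prop :=
  ∀ p ∈ Δ, ∀ i (w : Fin p.1 → ℕ), (∀ q, w q < i) →
    (p.2.Realize (Sum.elim (b i ∘ Sum.inr ∘ Sum.inl) fun q => b (w q.1) q.2) ↔
      p.2.Realize (Sum.elim (b i ∘ Sum.inr ∘ Sum.inr) fun q => b (w q.1) q.2))

def IndiscernibleOn {γ : Type*} (Δ : Finset (Σ r, L.Formula (Fin r × γ))) (b : ℕ → γ → M) :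
    Prop :=
  ∀ p ∈ Δ, ∀ s t : Fin p.1 → ℕ, StrictMono s → StrictMono t →
    (p.2.Realize (fun q => b (s q.1) q.2) ↔ p.2.Realize (fun q => b (t q.1) q.2))

theorem IsSOP1Array.comp {φ : L.Formula (Fin n ⊕ Fin m)} {b : ℕ → ArrayVars n m → M}
    (hb : IsSOP1Array φ b) {g : ℕ → ℕ} (hg : StrictMono g) : IsSOP1Array φ (b ∘ g) :=
  ⟨fun _ _ hji => hb.1 _ _ (hg.monotone hji), fun _ _ hij => hb.2 _ _ (hg.injective.ne hij)⟩

theorem SameTypeOn.comp {Δ : Finset (Σ r, L.Formula (Fin m ⊕ (Fin r × ArrayVars n m)))}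
    {b : ℕ → ArrayVars n m → M} (hb : SameTypeOn Δ b) {g : ℕ → ℕ} (hg : StrictMono g) :
    SameTypeOn Δ (b ∘ g) :=
  fun p hp i w hw => hb p hp (g i) (g ∘ w) fun q => hg (hw q)

theorem exists_strictMono_indiscernibleOn {γ : Type*} (Δ : Finset (Σ r, L.Formula (Fin r × γ)))
    (b : ℕ → γ → M) : ∃ g : ℕ → ℕ, StrictMono g ∧ IndiscernibleOn Δ (b ∘ g) := by
  obtain ⟨g, hg, hhom⟩ := exists_strictMono_homogeneous_finset Sigma.fst
    (fun p v => p.2.Realize fun q => b (v q.1) q.2) Δ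
  exact ⟨g, hg, fun p hp s t hs ht => (hhom p hp s t hs ht).to_iff⟩

theorem exists_forall_prefix_realize {φ : L.Formula (Fin n ⊕ Fin m)}
    {t : List Bool → Fin m → M}
    (hcons : ∀ (f : ℕ → Bool) (N : ℕ), ∃ a : Fin n → M, ∀ k ≤ N,
      φ.Realize (Sum.elim a (t (List.ofFn fun i : Fin k => f i))))
    (ρ : List Bool) : ∃ a : Fin n → M, ∀ σ, σ <+: ρ → φ.Realize (Sum.elim a (t σ)) := by
  obtain ⟨a, ha⟩ := hcons (fun k => ρ.getD k false) ρ.length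
  exact ⟨a, fun σ hσ => hσ.ofFn_getD ▸ ha σ.length hσ.length_le⟩

theorem FormulaSOP1.exists_sameTypeOn {φ : L.Formula (Fin n ⊕ Fin m)} (hφ : FormulaSOP1 φ M)
    (Δ : Finset (Σ r, L.Formula (Fin m ⊕ (Fin r × ArrayVars n m)))) :
    ∃ b : ℕ → ArrayVars n m → M, IsSOP1Array φ b ∧ SameTypeOn Δ b := by
  obtain ⟨t, hcons, hinc⟩ := hφ
  have step : ∀ (ρ : List Bool) (k : ℕ) (past : Fin k → ArrayVars n m → M),
      ∃ (ρ' : List Bool) (x : ArrayVars n m → M) (ν : List Bool), ρ <+: ν ∧ ν ++ [false] <+: ρ' ∧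
        (∀ σ, σ <+: ρ' → φ.Realize (Sum.elim (x ∘ Sum.inl) (t σ))) ∧
        x ∘ Sum.inr ∘ Sum.inl = t ρ' ∧ x ∘ Sum.inr ∘ Sum.inr = t (ν ++ [true]) ∧
        ∀ p ∈ Δ, ∀ w : Fin p.1 → Fin k,
          (p.2.Realize (Sum.elim (x ∘ Sum.inr ∘ Sum.inl) fun q => past (w q.1) q.2) ↔
            p.2.Realize (Sum.elim (x ∘ Sum.inr ∘ Sum.inr) fun q => past (w q.1) q.2)) := by
    intro ρ k past
    obtain ⟨ν, ρ', hρν, hνρ', hcol⟩ := exists_prefix_append_false_prefix_eq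
      (fun η (p : Δ) (w : Fin p.1.1 → Fin k) =>
        p.1.2.Realize (Sum.elim (t η) fun q => past (w q.1) q.2)) ρ
    obtain ⟨a, ha⟩ := exists_forall_prefix_realize hcons ρ'
    exact ⟨ρ', Sum.elim a (Sum.elim (t ρ') (t (ν ++ [true]))), ν, hρν, hνρ', ha, rfl, rfl,
      fun p hp w => (congrFun (congrFun hcol ⟨p, hp⟩) w).to_iff⟩
  obtain ⟨node, b, -, hb⟩ := exists_seq_of_forall_exists_next [] _ step
  choose ν hρν hνρ ha hc0 hc1 hsame using hb
  have hchain : ∀ i j, i ≤ j → node i <+: node j := by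
    intro i j hij
    induction j, hij using Nat.le_induction with
    | base => exact List.prefix_refl _
    | succ j _ ih => exact ih.trans ((hρν j).trans ((List.prefix_append _ _).trans (hνρ j)))
  refine ⟨b, ⟨fun i j hji => ?_, fun i j hij => ?_⟩,
    fun p hp i w hw => hsame i p hp fun q => ⟨w q, hw q⟩⟩
  · rw [hc0]
    exact ha i _ (hchain _ _ (by omega))
  · wlog hlt : i < j generalizing i j
    · exact fun h => this j i hij.symm (by omega) (h.imp fun _ => And.symm)
    rw [hc1, hc1]
    refine fun ⟨x, hxi, hxj⟩ => hinc (ν i) (ν j ++ [true]) ?_ ⟨x, hxj, hxi⟩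
    exact (hνρ i).trans ((hchain _ _ hlt).trans ((hρν j).trans (List.prefix_append _ _)))

theorem FormulaSOP1.exists_sameTypeOn_indiscernibleOn {φ : L.Formula (Fin n ⊕ Fin m)}
    (hφ : FormulaSOP1 φ M) (Δ : Finset (Σ r, L.Formula (Fin m ⊕ (Fin r × ArrayVars n m))))
    (Δ' : Finset (Σ r, L.Formula (Fin r × ArrayVars n m))) :
    ∃ b : ℕ → ArrayVars n m → M, IsSOP1Array φ b ∧ SameTypeOn Δ b ∧ IndiscernibleOn Δ' b := by
  obtain ⟨b, hb, hΔ⟩ := hφ.exists_sameTypeOn Δ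
  obtain ⟨g, hg, hΔ'⟩ := exists_strictMono_indiscernibleOn Δ' b
  exact ⟨b ∘ g, hb.comp hg, hΔ.comp hg, hΔ'⟩

end Array

inductive ArrayCondition (L : FirstOrder.Language.{u, v}) (n m : ℕ)
  | indiscernible {r : ℕ} (ψ : L.Formula (Fin r × ArrayVars n m)) (s t : Fin r → ℕ)
      (hs : StrictMono s) (ht : StrictMono t)
  | realize (i j : ℕ) (hji : j ≤ i)
  | incompatible (i j : ℕ) (hij : i ≠ j)
  | sameType (i : ℕ) (ψ : L.Formula (Fin m ⊕ (Fin i × ArrayVars n m)))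

namespace ArrayCondition

variable {n m : ℕ}

def Holds (φ : L.Formula (Fin n ⊕ Fin m)) (b : ℕ → ArrayVars n m → M) :
    ArrayCondition L n m → Prop
  | indiscernible ψ s t _ _ =>
    ψ.Realize (fun q => b (s q.1) q.2) ↔ ψ.Realize (fun q => b (t q.1) q.2)
  | realize i j _ => φ.Realize (Sum.elim (b i ∘ Sum.inl) (b j ∘ Sum.inr ∘ Sum.inl))
  | incompatible i j _ => ¬ ∃ x : Fin n → M, φ.Realize (Sum.elim x (b i ∘ Sum.inr ∘ Sum.inr)) ∧
      φ.Realize (Sum.elim x (b j ∘ Sum.inr ∘ Sum.inr))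
  | sameType i ψ => ψ.Realize (Sum.elim (b i ∘ Sum.inr ∘ Sum.inl) fun q => b q.1 q.2) ↔
      ψ.Realize (Sum.elim (b i ∘ Sum.inr ∘ Sum.inr) fun q => b q.1 q.2)

noncomputable def toFormula (φ : L.Formula (Fin n ⊕ Fin m)) :
    ArrayCondition L n m → L.Formula (ℕ × ArrayVars n m)
  | indiscernible ψ s t _ _ =>
    (ψ.relabel fun q => (s q.1, q.2)).iff (ψ.relabel fun q => (t q.1, q.2))
  | realize i j _ =>
    φ.relabel (Sum.elim (fun k => (i, Sum.inl k)) fun k => (j, Sum.inr (Sum.inl k)))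
  | incompatible i j _ =>
    (((φ.relabel (Sum.map id Sum.inl) ⊓ φ.relabel (Sum.map id Sum.inr)).relabel
      (Sum.elim Sum.inr (Sum.elim (fun k => Sum.inl (i, Sum.inr (Sum.inr k)))
        fun k => Sum.inl (j, Sum.inr (Sum.inr k))))).iExs (Fin n)).not
  | sameType i ψ =>
    (ψ.relabel (Sum.elim (fun k => (i, Sum.inr (Sum.inl k))) fun q => (q.1, q.2))).iff
      (ψ.relabel (Sum.elim (fun k => (i, Sum.inr (Sum.inr k))) fun q => (q.1, q.2)))

theorem realize_toFormula (φ : L.Formula (Fin n ⊕ Fin m)) (b : ℕ → ArrayVars n m → M)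
    (c : ArrayCondition L n m) :
    (c.toFormula φ).Realize (fun p => b p.1 p.2) ↔ c.Holds φ b := by
  cases c <;> simp only [toFormula, Holds, Formula.realize_relabel, Formula.realize_iff,
    Formula.realize_not, Formula.realize_iExs, Formula.realize_inf, Sum.comp_elim,
    ← Function.comp_assoc, Sum.elim_comp_map] <;> rfl

def sameTypeFormulas :
    ArrayCondition L n m → Finset (Σ r, L.Formula (Fin m ⊕ (Fin r × ArrayVars n m)))
  | sameType i ψ => {⟨i, ψ⟩}
  | _ => ∅

def indiscernibleFormulas : ArrayCondition L n m → Finset (Σ r, L.Formula (Fin r × ArrayVars n m))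
  | indiscernible ψ _ _ _ _ => {⟨_, ψ⟩}
  | _ => ∅

theorem exists_forall_mem_holds {φ : L.Formula (Fin n ⊕ Fin m)} (hφ : FormulaSOP1 φ M)
    (S : Finset (ArrayCondition L n m)) :
    ∃ b : ℕ → ArrayVars n m → M, ∀ c ∈ S, c.Holds φ b := by
  classical
  obtain ⟨b, hb, hsame, hind⟩ := hφ.exists_sameTypeOn_indiscernibleOn
    (S.biUnion sameTypeFormulas) (S.biUnion indiscernibleFormulas)
  refine ⟨b, fun c hc => ?_⟩
  cases c with
  | indiscernible ψ s t hs ht =>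
    exact hind _ (Finset.mem_biUnion.2 ⟨_, hc, Finset.mem_singleton_self _⟩) s t hs ht
  | realize i j hji => exact hb.1 i j hji
  | incompatible i j hij => exact hb.2 i j hij
  | sameType i ψ =>
    exact hsame _ (Finset.mem_biUnion.2 ⟨_, hc, Finset.mem_singleton_self _⟩) i _ Fin.isLt

theorem exists_forall_holds {κ : Cardinal.{w}} (hsat : IsSaturatedIn L M κ) (hκ : ℵ₀ < κ)
    {φ : L.Formula (Fin n ⊕ Fin m)} (hφ : FormulaSOP1 φ M) :
    ∃ b : ℕ → ArrayVars n m → M, ∀ c : ArrayCondition L n m, c.Holds φ b := by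
  obtain ⟨v, hv⟩ := hsat.exists_forall_realize hκ (toFormula φ) fun S =>
    let ⟨b, hb⟩ := exists_forall_mem_holds hφ S
    ⟨_, fun c hc => (realize_toFormula φ b c).2 (hb c hc)⟩
  exact ⟨fun i x => v (i, x), fun c => (realize_toFormula φ _ c).1 (hv c)⟩

end ArrayCondition

/-- from SOP₁, one obtains a formula `φ` and an indiscernible sequence
`⟨(aᵢ, c_{i,0}, c_{i,1})⟩` with `aᵢ ⊨ {φ(x;c_{j,0}) : j ≤ i}`, `{φ(x;c_{i,1})}`
2-inconsistent, and `c_{i,0} ≡_{a_{<i} c_{<i,0} c_{<i,1}} c_{i,1}`. -/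
theorem sop1_good_indiscernible (h : HasSOP1 L M)
    (κ : Cardinal.{w}) (hκ : ℵ₀ < κ) (hsat : IsSaturatedIn L M κ) :
    ∃ (n m : ℕ) (φ : L.Formula (Fin n ⊕ Fin m))
      (a : ℕ → Fin n → M) (c0 c1 : ℕ → Fin m → M),
      Indiscernible (L := L) (∅ : Set M)
        (fun i : ℕ => (Sum.elim (a i) (Sum.elim (c0 i) (c1 i)) :
          Fin n ⊕ (Fin m ⊕ Fin m) → M)) ∧
      (∀ i j : ℕ, j ≤ i → φ.Realize (Sum.elim (a i) (c0 j))) ∧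
      (∀ i j : ℕ, i ≠ j → ¬ ∃ x : Fin n → M,
        φ.Realize (Sum.elim x (c1 i)) ∧ φ.Realize (Sum.elim x (c1 j))) ∧
      (∀ i : ℕ, EqTp (L := L)
        (⋃ j ∈ {j : ℕ | j < i},
          (Set.range (a j) ∪ Set.range (c0 j) ∪ Set.range (c1 j)))
        (c0 i) (c1 i)) := by
  obtain ⟨n, m, φ, hφ⟩ := h
  obtain ⟨b, hb⟩ := ArrayCondition.exists_forall_holds hsat hκ hφ
  have hrow : ∀ i, Sum.elim (b i ∘ Sum.inl) (Sum.elim (b i ∘ Sum.inr ∘ Sum.inl)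
      (b i ∘ Sum.inr ∘ Sum.inr)) = b i := fun i => by
    funext x
    rcases x with _ | _ | _ <;> rfl
  refine ⟨n, m, φ, fun i => b i ∘ Sum.inl, fun i => b i ∘ Sum.inr ∘ Sum.inl,
    fun i => b i ∘ Sum.inr ∘ Sum.inr, ?_, fun i j hji => hb (.realize i j hji),
    fun i j hij => hb (.incompatible i j hij), fun i => ?_⟩
  · simp only [hrow]
    exact fun r s t hs ht => eqTp_empty_of_forall_realize fun ψ => hb (.indiscernible ψ s t hs ht)
  · refine eqTp_of_forall_realize (fun q : Fin i × ArrayVars n m => b q.1 q.2) ?_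
      fun ψ => hb (.sameType i ψ)
    simp only [iUnion_subset_iff, union_subset_iff, range_subset_iff]
    exact fun j hj => ⟨⟨fun k => ⟨(⟨j, hj⟩, _), rfl⟩, fun k => ⟨(⟨j, hj⟩, _), rfl⟩⟩,
      fun k => ⟨(⟨j, hj⟩, _), rfl⟩⟩

end KimPaper
end
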